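/- arXiv:1102.5750 — 5 statements merged into one kernel-verified Lean document; each statement's English description precedes it below -/
import Mathlib

section
/- Let N be a binomial random variable with parameters n ≥ 1 and 0 < q ≤ 1/2. Then P(N ≥ nq) ≥ min(q, 1/4). -/
/-!
Let `k = ⌈nq⌉`. If `k = 1` the event is `N ≥ 1`, of probability `1 - (1 - q)^n ≥ q`. Otherwise
`m = k - 1` satisfies `1 ≤ m < nq ≤ n/2`. The upper tail `P(N ≥ m + 1)` increases with the success
probability (its derivative is `n P(Bin(n - 1, p) = m) ≥ 0`), so it suffices to take `q = m/n`, where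
the mean is the integer `m`. There the masses pair off, `P(N = m - 1 - i) ≤ P(N = m + i)`, whence
`P(N < m) ≤ P(N ≥ m)` and `P(N ≥ m + 1) ≥ 1/2 - P(N = m)`. The mode `P(N = m)` decreases in `n`
(because `(1 + 1/k)^k` increases in `k`) and is at most `1/4` from `n = 2m + 1` on when `m ≥ 5`
(a central binomial estimate), and from `n = 27` on when `m = 3, 4`. For `m ≤ 2` and `n ≥ 27`,
`P(N ≤ m) ≤ e^{-m} ∑_{j ≤ m} C(n, j) (m/(n - m))^j ≤ 3/4`; the finitely many cases `m ≤ 4`,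
`n ≤ 26` are computed.
-/

open Finset Real

noncomputable def binomialMass (n : ℕ) (p : ℝ) (j : ℕ) : ℝ :=
  n.choose j * p ^ j * (1 - p) ^ (n - j)

noncomputable def binomialTail (n : ℕ) (p : ℝ) (k : ℕ) : ℝ :=
  ∑ j ∈ Ico k (n + 1), binomialMass n p j

lemma binomialMass_eq_eval (n : ℕ) (p : ℝ) (j : ℕ) :
    binomialMass n p j = (bernsteinPolynomial ℝ n j).eval p := by
  simp [binomialMass, bernsteinPolynomial]

lemma binomialMass_nonneg {n : ℕ} {p : ℝ} (hp0 : 0 ≤ p) (hp1 : p ≤ 1) (j : ℕ) :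
    0 ≤ binomialMass n p j := by
  have : 0 ≤ 1 - p := sub_nonneg.2 hp1
  unfold binomialMass
  positivity

lemma sum_binomialMass (n : ℕ) (p : ℝ) : ∑ j ∈ range (n + 1), binomialMass n p j = 1 := by
  simp only [binomialMass_eq_eval, ← Polynomial.eval_finsetSum, bernsteinPolynomial.sum,
    Polynomial.eval_one]

lemma sum_range_add_binomialTail {n k : ℕ} (hk : k ≤ n + 1) (p : ℝ) :
    ∑ j ∈ range k, binomialMass n p j + binomialTail n p k = 1 := by
  rw [binomialTail, sum_range_add_sum_Ico _ hk, sum_binomialMass]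

lemma le_binomialTail_one {n : ℕ} (hn : 1 ≤ n) {p : ℝ} (hp0 : 0 ≤ p) (hp1 : p ≤ 1) :
    p ≤ binomialTail n p 1 := by
  have htotal := sum_range_add_binomialTail (by omega : 1 ≤ n + 1) p
  have hpow : (1 - p) ^ n ≤ 1 - p := pow_le_of_le_one (by linarith) (by linarith) (by omega)
  simp only [range_one, sum_singleton, binomialMass, Nat.choose_zero_right, pow_zero,
    Nat.sub_zero, Nat.cast_one, one_mul] at htotal
  linarith

lemma derivative_sum_Ico_bernsteinPolynomial (n k : ℕ) :
    Polynomial.derivative (∑ j ∈ Ico (k + 1) (n + 2), bernsteinPolynomial ℝ (n + 1) j) =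
      (n + 1) * bernsteinPolynomial ℝ n k := by
  rcases le_or_gt k (n + 1) with hk | hk
  · rw [Polynomial.derivative_sum, ← sum_Ico_add']
    simp only [bernsteinPolynomial.derivative_succ_aux, ← mul_sum]
    have htelescope := sum_Ico_sub (bernsteinPolynomial ℝ n) hk
    rw [← neg_inj, ← sum_neg_distrib] at htelescope
    simp only [neg_sub] at htelescope
    rw [htelescope, bernsteinPolynomial.eq_zero_of_lt ℝ (Nat.lt_succ_self n), sub_zero]
  · rw [Ico_eq_empty (by omega), bernsteinPolynomial.eq_zero_of_lt ℝ (by omega)]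
    simp

lemma hasDerivAt_binomialTail (n k : ℕ) (p : ℝ) :
    HasDerivAt (fun p => binomialTail (n + 1) p (k + 1)) ((n + 1) * binomialMass n p k) p := by
  have h := (∑ j ∈ Ico (k + 1) (n + 2), bernsteinPolynomial ℝ (n + 1) j).hasDerivAt p
  rw [derivative_sum_Ico_bernsteinPolynomial] at h
  simpa [binomialTail, binomialMass_eq_eval, Polynomial.eval_finsetSum] using h

lemma monotoneOn_binomialTail (n k : ℕ) :
    MonotoneOn (fun p => binomialTail n p (k + 1)) (Set.Icc 0 1) := by
  cases n with
  | zero => simp [binomialTail, monotoneOn_const]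
  | succ n =>
    refine monotoneOn_of_hasDerivWithinAt_nonneg (convex_Icc 0 1)
      (fun p _ => (hasDerivAt_binomialTail n k p).continuousAt.continuousWithinAt)
      (fun p _ => (hasDerivAt_binomialTail n k p).hasDerivWithinAt) fun p hp => ?_
    rw [interior_Icc] at hp
    have := binomialMass_nonneg (n := n) hp.1.le hp.2.le k
    positivity

def binomialWeight (n m j : ℕ) : ℕ := n.choose j * m ^ j * (n - m) ^ (n - j)

lemma binomialMass_mean {n m : ℕ} (hn : 0 < n) (hmn : m ≤ n) (j : ℕ) :
    binomialMass n (m / n) j = binomialWeight n m j / n ^ n := by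
  rcases le_or_gt j n with hj | hj
  · have hn' : (n : ℝ) ≠ 0 := by positivity
    have hq : 1 - (m : ℝ) / n = ((n - m : ℕ) : ℝ) / n := by
      rw [Nat.cast_sub hmn]; field_simp
    rw [binomialMass, binomialWeight, hq, div_pow, div_pow,
      show (n : ℝ) ^ n = n ^ j * n ^ (n - j) by rw [← pow_add, Nat.add_sub_cancel' hj]]
    push_cast
    field_simp
  · simp [binomialMass, binomialWeight, Nat.choose_eq_zero_of_lt hj]

lemma binomialWeight_succ_mul {n j : ℕ} (hj : j < n) (m : ℕ) :
    binomialWeight n m (j + 1) * ((j + 1) * (n - m)) = binomialWeight n m j * ((n - j) * m) := by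
  have hpow : n - j = n - (j + 1) + 1 := by omega
  calc binomialWeight n m (j + 1) * ((j + 1) * (n - m))
      = n.choose (j + 1) * (j + 1) * (m ^ j * m) * ((n - m) ^ (n - (j + 1)) * (n - m)) := by
        rw [binomialWeight, pow_succ]; ring
    _ = binomialWeight n m j * ((n - j) * m) := by
        rw [Nat.choose_succ_right_eq, binomialWeight, hpow, pow_succ, ← hpow]; ring

lemma binomialWeight_reflect_le {n m : ℕ} (hmn : 2 * m ≤ n) :
    ∀ i < m, binomialWeight n m (m - 1 - i) ≤ binomialWeight n m (m + i) := by
  intro i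
  induction i with
  | zero =>
    intro hm
    have hstep := binomialWeight_succ_mul (n := n) (j := m - 1) (by omega) m
    rw [Nat.sub_add_cancel hm] at hstep
    refine Nat.le_of_mul_le_mul_right (c := m * (n - m)) ?_ (Nat.mul_pos hm (by omega))
    rw [Nat.sub_zero, Nat.add_zero, hstep]
    exact Nat.mul_le_mul_left _ (by rw [mul_comm m]; exact Nat.mul_le_mul_right _ (by omega))
  | succ i ih =>
    intro hi
    set s := n - m
    have hlow := binomialWeight_succ_mul (n := n) (j := m - 2 - i) (by omega) m
    have hhigh := binomialWeight_succ_mul (n := n) (j := m + i) (by omega) m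
    rw [show m - 2 - i + 1 = m - 1 - i by omega, show n - (m - 2 - i) = s + 2 + i by omega]
      at hlow
    rw [show n - (m + i) = s - i by omega] at hhigh
    -- `(A² - c²) B² ≤ ((B + 1)² - c²) A²` for `c ≤ A ≤ B`, with `A = m`, `B = s`, `c = i + 1`
    have hkey : (m - 1 - i) * (m + 1 + i) * s ^ 2 ≤ (s - i) * (s + 2 + i) * m ^ 2 := by
      zify [show i ≤ m - 1 by omega, show 1 ≤ m by omega, show i ≤ s by omega]
      have hms : (m : ℤ) ≤ s := by omega
      nlinarith [mul_nonneg (sq_nonneg ((i : ℤ) + 1)) (mul_nonneg (sub_nonneg.2 hms)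
        (by positivity : (0 : ℤ) ≤ s + m))]
    refine Nat.le_of_mul_le_mul_right (c := (s + 2 + i) * m * ((m + i + 1) * s)) ?_
      (Nat.mul_pos (Nat.mul_pos (by omega) (by omega)) (Nat.mul_pos (by omega) (by omega)))
    calc binomialWeight n m (m - 1 - (i + 1)) * ((s + 2 + i) * m * ((m + i + 1) * s))
        = binomialWeight n m (m - 1 - i) * ((m - 1 - i) * s) * ((m + i + 1) * s) := by
          rw [hlow, show m - 1 - (i + 1) = m - 2 - i by omega]; ring
      _ = binomialWeight n m (m - 1 - i) * ((m - 1 - i) * (m + 1 + i) * s ^ 2) := by ring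
      _ ≤ binomialWeight n m (m + i) * ((m - 1 - i) * (m + 1 + i) * s ^ 2) :=
          Nat.mul_le_mul_right _ (ih (by omega))
      _ ≤ binomialWeight n m (m + i) * ((s - i) * (s + 2 + i) * m ^ 2) :=
          Nat.mul_le_mul_left _ hkey
      _ = binomialWeight n m (m + (i + 1)) * ((s + 2 + i) * m * ((m + i + 1) * s)) := by
          rw [← add_assoc]
          calc _ = binomialWeight n m (m + i) * ((s - i) * m) * ((s + 2 + i) * m) := by ring
            _ = _ := by rw [← hhigh]; ring

lemma sum_range_binomialWeight_le {n m : ℕ} (hmn : 2 * m ≤ n) :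
    ∑ j ∈ range m, binomialWeight n m j ≤ ∑ j ∈ Ico m (n + 1), binomialWeight n m j := by
  calc ∑ j ∈ range m, binomialWeight n m j
      = ∑ i ∈ range m, binomialWeight n m (m - 1 - i) :=
        (sum_range_reflect (binomialWeight n m) m).symm
    _ ≤ ∑ i ∈ range m, binomialWeight n m (m + i) :=
        sum_le_sum fun i hi => binomialWeight_reflect_le hmn i (mem_range.1 hi)
    _ = ∑ j ∈ Ico m (m + m), binomialWeight n m j := by
        rw [sum_Ico_eq_sum_range, Nat.add_sub_cancel]
    _ ≤ ∑ j ∈ Ico m (n + 1), binomialWeight n m j :=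
        sum_le_sum_of_subset (Ico_subset_Ico_right (by omega))

lemma sum_range_binomialMass_mean_le_binomialTail {n m : ℕ} (hmn : 2 * m ≤ n) :
    ∑ j ∈ range m, binomialMass n (m / n) j ≤ binomialTail n (m / n) m := by
  rcases Nat.eq_zero_or_pos n with rfl | hn
  · simp [show m = 0 by omega, binomialTail, binomialMass]
  · simp only [binomialTail, binomialMass_mean hn (by omega : m ≤ n), ← sum_div]
    exact div_le_div_of_nonneg_right (by exact_mod_cast sum_range_binomialWeight_le hmn)
      (by positivity)

lemma half_le_binomialMass_add_binomialTail {n m : ℕ} (hmn : 2 * m ≤ n) :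
    1 / 2 ≤ binomialMass n (m / n) m + binomialTail n (m / n) (m + 1) := by
  have htotal := sum_range_add_binomialTail (by omega : m ≤ n + 1) (m / n : ℝ)
  have hsplit : binomialTail n (m / n : ℝ) m =
      binomialMass n (m / n) m + binomialTail n (m / n) (m + 1) :=
    sum_eq_sum_Ico_succ_bot (by omega) _
  have := sum_range_binomialMass_mean_le_binomialTail hmn
  linarith

-- `(1 + 1/k)^k` increases with `k`: Bernoulli's inequality for `(1 - 1/(k+1)²)^(k+1)`.
lemma succ_pow_le_pow_mul_succ_pow {k : ℕ} (hk : 1 ≤ k) :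
    (k + 1) ^ (2 * k + 1) ≤ k ^ k * (k + 2) ^ (k + 1) := by
  have hk0 : (0 : ℝ) < k := by exact_mod_cast hk
  have hsmall : 1 / ((k : ℝ) + 1) ^ 2 ≤ 1 := by rw [div_le_one (by positivity)]; nlinarith
  have hbern := one_add_mul_le_pow (a := -(1 / ((k : ℝ) + 1) ^ 2)) (by linarith) (k + 1)
  have e1 : (1 : ℝ) + (k + 1 : ℕ) * (-(1 / ((k : ℝ) + 1) ^ 2)) = k / (k + 1) := by
    push_cast; field_simp; ring
  have e2 : (1 : ℝ) + -(1 / ((k : ℝ) + 1) ^ 2) = k * (k + 2) / (k + 1) ^ 2 := by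
    field_simp; ring
  rw [e1, e2, div_pow, div_le_div_iff₀ (by positivity) (by positivity), mul_pow, ← pow_mul,
    show 2 * (k + 1) = 2 * k + 1 + 1 by ring, pow_succ, pow_succ (k : ℝ)] at hbern
  have : ((k + 1 : ℕ) : ℝ) ^ (2 * k + 1) ≤ ((k ^ k * (k + 2) ^ (k + 1) : ℕ) : ℝ) := by
    push_cast
    nlinarith [mul_pos hk0 (by positivity : (0 : ℝ) < k + 1)]
  exact_mod_cast this

lemma succ_pow_mul_pow_le {a b : ℕ} (ha : 1 ≤ a) (hab : a ≤ b) :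
    (a + 1) ^ a * b ^ b ≤ a ^ a * (b + 1) ^ b := by
  induction b, hab using Nat.le_induction with
  | base => rw [mul_comm]
  | succ b hab ih =>
    refine Nat.le_of_mul_le_mul_right (c := b ^ b) ?_ (Nat.pow_pos (by omega))
    calc (a + 1) ^ a * (b + 1) ^ (b + 1) * b ^ b
        = (a + 1) ^ a * b ^ b * (b + 1) ^ (b + 1) := by ring
      _ ≤ a ^ a * (b + 1) ^ b * (b + 1) ^ (b + 1) := Nat.mul_le_mul_right _ ih
      _ = a ^ a * (b + 1) ^ (2 * b + 1) := by rw [mul_assoc, ← pow_add]; ring_nf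
      _ ≤ a ^ a * (b ^ b * (b + 2) ^ (b + 1)) :=
        Nat.mul_le_mul_left _ (succ_pow_le_pow_mul_succ_pow (by omega))
      _ = a ^ a * (b + 1 + 1) ^ (b + 1) * b ^ b := by ring

lemma binomialWeight_succ_mode_le {n m : ℕ} (hmn : m < n) :
    binomialWeight (n + 1) m m * n ^ n ≤ binomialWeight n m m * (n + 1) ^ (n + 1) := by
  have hchoose : (n + 1).choose m * (n - m + 1) = (n + 1) * n.choose m := by
    rw [show n - m + 1 = n + 1 - m by omega, ← Nat.choose_mul_succ_eq, mul_comm]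
  have hpow := succ_pow_mul_pow_le (a := n - m) (b := n) (by omega) (by omega)
  calc binomialWeight (n + 1) m m * n ^ n
      = m ^ m * ((n + 1).choose m * (n - m + 1)) * ((n - m + 1) ^ (n - m) * n ^ n) := by
        rw [binomialWeight, show n + 1 - m = n - m + 1 by omega, pow_succ]
        ring
    _ ≤ m ^ m * ((n + 1) * n.choose m) * ((n - m) ^ (n - m) * (n + 1) ^ n) := by
        rw [hchoose]; exact Nat.mul_le_mul_left _ hpow
    _ = binomialWeight n m m * (n + 1) ^ (n + 1) := by
        rw [binomialWeight]; ring

lemma antitoneOn_binomialMass_mean (m : ℕ) :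
    AntitoneOn (fun n : ℕ => binomialMass n (m / n) m) {n | m + 1 ≤ n} := by
  refine antitoneOn_nat_Ici_of_succ_le fun n (hn : m + 1 ≤ n) => ?_
  have hn0 : (0 : ℝ) < n := by exact_mod_cast (by omega : 0 < n)
  simp only [binomialMass_mean (by omega : 0 < n + 1) (by omega : m ≤ n + 1),
    binomialMass_mean (by omega : 0 < n) (by omega : m ≤ n)]
  rw [div_le_div_iff₀ (by positivity) (by positivity)]
  exact_mod_cast binomialWeight_succ_mode_le (by omega : m < n)

lemma centralBinom_sq_mul_le (m : ℕ) : m.centralBinom ^ 2 * (3 * m + 1) ≤ 16 ^ m := by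
  induction m with
  | zero => simp
  | succ m ih =>
    refine Nat.le_of_mul_le_mul_right (c := (m + 1) ^ 2 * (3 * m + 1)) ?_ (by positivity)
    calc (m + 1).centralBinom ^ 2 * (3 * (m + 1) + 1) * ((m + 1) ^ 2 * (3 * m + 1))
        = ((m + 1) * (m + 1).centralBinom) ^ 2 * ((3 * m + 4) * (3 * m + 1)) := by ring
      _ = 4 * (2 * m + 1) ^ 2 * (3 * m + 4) * (m.centralBinom ^ 2 * (3 * m + 1)) := by
        rw [Nat.succ_mul_centralBinom_succ]; ring
      _ ≤ 16 * (m + 1) ^ 2 * (3 * m + 1) * 16 ^ m :=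
        Nat.mul_le_mul (by nlinarith) ih
      _ = 16 ^ (m + 1) * ((m + 1) ^ 2 * (3 * m + 1)) := by ring

lemma four_mul_binomialWeight_mode_le {m : ℕ} (hm : 5 ≤ m) :
    4 * binomialWeight (2 * m + 1) m m ≤ (2 * m + 1) ^ (2 * m + 1) := by
  have hweight : binomialWeight (2 * m + 1) m m =
      (2 * m + 1) * m.centralBinom * (m * (m + 1)) ^ m := by
    have hchoose := Nat.add_one_mul_choose_eq (2 * m) m
    rw [Nat.choose_symm_half, ← Nat.centralBinom_eq_two_mul_choose] at hchoose
    rw [binomialWeight, show 2 * m + 1 - m = m + 1 by omega, hchoose, pow_succ, mul_pow]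
    ring
  have hcentral : 4 * m.centralBinom ≤ 4 ^ m := by
    refine (Nat.pow_le_pow_iff_left (two_ne_zero)).1 ?_
    calc (4 * m.centralBinom) ^ 2 ≤ m.centralBinom ^ 2 * (3 * m + 1) := by nlinarith
      _ ≤ 16 ^ m := centralBinom_sq_mul_le m
      _ = (4 ^ m) ^ 2 := by rw [← pow_mul, mul_comm, pow_mul]; norm_num
  calc 4 * binomialWeight (2 * m + 1) m m
      = (2 * m + 1) * (4 * m.centralBinom) * (m * (m + 1)) ^ m := by rw [hweight]; ring
    _ ≤ (2 * m + 1) * 4 ^ m * (m * (m + 1)) ^ m := by gcongr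
    _ = (2 * m + 1) * (4 * (m * (m + 1))) ^ m := by rw [mul_pow (4 : ℕ)]; ring
    _ ≤ (2 * m + 1) * ((2 * m + 1) ^ 2) ^ m := by gcongr; nlinarith
    _ = (2 * m + 1) ^ (2 * m + 1) := by rw [← pow_mul, pow_succ]; ring

lemma binomialMass_mean_le_quarter {n m n₀ : ℕ} (hn₀ : m < n₀) (hn : n₀ ≤ n)
    (hweight : 4 * binomialWeight n₀ m m ≤ n₀ ^ n₀) : binomialMass n (m / n) m ≤ 1 / 4 := by
  refine (antitoneOn_binomialMass_mean m (show m + 1 ≤ n₀ from hn₀)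
    (show m + 1 ≤ n by omega) hn).trans ?_
  dsimp only
  have hn₀' : (0 : ℝ) < n₀ := by exact_mod_cast (by omega : 0 < n₀)
  rw [binomialMass_mean (by omega) hn₀.le, div_le_div_iff₀ (by positivity) (by norm_num)]
  exact_mod_cast (by linarith [hweight] : binomialWeight n₀ m m * 4 ≤ 1 * n₀ ^ n₀)

lemma binomialMass_eq_one_sub_pow_mul {n j : ℕ} (hj : j ≤ n) {p : ℝ} (hp : p ≠ 1) :
    binomialMass n p j = (1 - p) ^ n * (n.choose j * (p / (1 - p)) ^ j) := by
  have : 1 - p ≠ 0 := sub_ne_zero.2 hp.symm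
  rw [binomialMass, pow_sub₀ _ this hj, div_pow]
  field_simp

lemma sum_range_binomialMass_mean_le {n m : ℕ} (hmn : m < n) :
    ∑ j ∈ range (m + 1), binomialMass n (m / n) j ≤
      exp (-m) * ∑ j ∈ range (m + 1), n.choose j * ((m : ℝ) / (n - m)) ^ j := by
  have hn : (0 : ℝ) < n := by exact_mod_cast (by omega : 0 < n)
  have hmn' : (m : ℝ) < n := by exact_mod_cast hmn
  have hp : (m : ℝ) / n ≠ 1 := by rw [Ne, div_eq_one_iff_eq hn.ne']; exact hmn'.ne
  have hodds : (m : ℝ) / n / (1 - m / n) = m / (n - m) := by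
    field_simp
  rw [sum_congr rfl fun j hj => binomialMass_eq_one_sub_pow_mul
    (by simp only [mem_range] at hj; omega) hp, ← mul_sum]
  simp only [hodds]
  gcongr
  exact one_sub_div_pow_le_exp_neg hmn'.le

lemma sum_range_binomialMass_mean_le_three_quarters {n m : ℕ} (hm : 1 ≤ m) (hm2 : m ≤ 2)
    (hn : 27 ≤ n) : ∑ j ∈ range (m + 1), binomialMass n (m / n) j ≤ 3 / 4 := by
  refine (sum_range_binomialMass_mean_le (by omega)).trans ?_
  have hn' : (27 : ℝ) ≤ n := by exact_mod_cast hn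
  have he : exp (-1) < 1 / 2.7182818283 := by
    rw [exp_neg, inv_eq_one_div]
    exact one_div_lt_one_div_of_lt (by norm_num) exp_one_gt_d9
  interval_cases m
  · simp only [sum_range_succ, range_one, sum_singleton, Nat.choose_zero_right,
      Nat.choose_one_right, pow_zero, pow_one, Nat.cast_one, one_mul]
    have hfrac : (n : ℝ) * (1 / (n - 1)) ≤ 27 / 26 := by
      rw [mul_one_div, div_le_div_iff₀ (by linarith) (by norm_num)]
      linarith
    have hpos : (0 : ℝ) ≤ n * (1 / (n - 1)) :=
      mul_nonneg (Nat.cast_nonneg n) (div_nonneg zero_le_one (by linarith))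
    calc exp (-1) * (1 + n * (1 / ((n : ℝ) - 1))) ≤ 1 / 2.7182818283 * (1 + 27 / 26) :=
          mul_le_mul he.le (by linarith) (by linarith) (by norm_num)
      _ ≤ 3 / 4 := by norm_num
  · simp only [sum_range_succ, range_one, sum_singleton, Nat.choose_zero_right,
      Nat.choose_one_right, pow_zero, pow_one, Nat.cast_one, one_mul, Nat.cast_ofNat]
    have hlin : (n : ℝ) * (2 / (n - 2)) ≤ 54 / 25 := by
      rw [mul_div_assoc', div_le_div_iff₀ (by linarith) (by norm_num)]
      linarith
    have hquad : (n.choose 2 : ℝ) * (2 / (n - 2)) ^ 2 ≤ 1404 / 625 := by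
      rw [Nat.cast_choose_two, div_pow, ← mul_div_assoc,
        div_le_div_iff₀ (by nlinarith) (by norm_num)]
      nlinarith
    have hpos : (0 : ℝ) ≤ 1 + n * (2 / (n - 2)) + (n.choose 2 : ℝ) * (2 / (n - 2)) ^ 2 := by
      have : (0 : ℝ) ≤ n * (2 / (n - 2)) :=
        mul_nonneg (Nat.cast_nonneg n) (div_nonneg zero_le_two (by linarith))
      positivity
    calc exp (-2) * (1 + n * (2 / (n - 2)) + (n.choose 2 : ℝ) * (2 / (n - 2)) ^ 2)
        ≤ (1 / 2.7182818283 * (1 / 2.7182818283)) * (1 + 54 / 25 + 1404 / 625) := by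
          rw [show (-2 : ℝ) = -1 + -1 by norm_num, exp_add]
          exact mul_le_mul (mul_le_mul he.le he.le (exp_pos _).le (by norm_num)) (by linarith)
            hpos (by norm_num)
      _ ≤ 3 / 4 := by norm_num

lemma four_mul_sum_range_binomialWeight_le {n m : ℕ} (hm : 1 ≤ m) (hm4 : m ≤ 4)
    (hmn : 2 * m + 1 ≤ n) (hn : n ≤ 26) :
    4 * ∑ j ∈ range (m + 1), binomialWeight n m j ≤ 3 * n ^ n := by
  interval_cases m <;> interval_cases n <;>
    norm_num [binomialWeight, sum_range_succ, Nat.choose]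

theorem quarter_le_binomialTail_mean {n m : ℕ} (hm : 1 ≤ m) (hmn : 2 * m + 1 ≤ n) :
    1 / 4 ≤ binomialTail n (m / n) (m + 1) := by
  have htotal := sum_range_add_binomialTail (by omega : m + 1 ≤ n + 1) (m / n : ℝ)
  have hhalf := half_le_binomialMass_add_binomialTail (by omega : 2 * m ≤ n)
  rcases le_or_gt 5 m with hm5 | hm5
  · linarith [binomialMass_mean_le_quarter (by omega) hmn (four_mul_binomialWeight_mode_le hm5)]
  rcases le_or_gt n 26 with hn | hn
  · have hsmall := four_mul_sum_range_binomialWeight_le hm (by omega) hmn hn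
    have hn0 : (0 : ℝ) < n := by exact_mod_cast (by omega : 0 < n)
    have hhead : ∑ j ∈ range (m + 1), binomialMass n (m / n) j ≤ 3 / 4 := by
      rw [sum_congr rfl fun j _ => binomialMass_mean (by omega) (by omega) j, ← sum_div,
        div_le_iff₀ (by positivity)]
      have : (4 * ∑ j ∈ range (m + 1), binomialWeight n m j : ℝ) ≤ 3 * n ^ n := by
        exact_mod_cast hsmall
      push_cast at this ⊢
      linarith
    linarith
  rcases le_or_gt m 2 with hm2 | hm3
  · linarith [sum_range_binomialMass_mean_le_three_quarters hm hm2 hn]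
  · have hweight : 4 * binomialWeight 27 m m ≤ 27 ^ 27 := by
      interval_cases m <;> norm_num [binomialWeight, Nat.choose]
    linarith [binomialMass_mean_le_quarter (by omega) hn hweight]

lemma sum_range_ite_le_eq_sum_Ico_ceil {M : Type*} [AddCommMonoid M] (x : ℝ) (f : ℕ → M)
    (n : ℕ) : ∑ j ∈ range (n + 1), (if x ≤ j then f j else 0) = ∑ j ∈ Ico ⌈x⌉₊ (n + 1), f j := by
  rw [← sum_filter]
  congr 1
  ext j
  simp [Nat.ceil_le, and_comm]

/-- If N ~ Binomial(n,q) with n ≥ 1 and 0 < q ≤ 1/2, then P(N ≥ nq) ≥ min(q, 1/4). -/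
theorem binomial_exceeds_mean (n : ℕ) (hn : 1 ≤ n) (q : ℝ) (hq0 : 0 < q) (hq1 : q ≤ 1 / 2) :
    min q (1 / 4) ≤
      ∑ j ∈ Finset.range (n + 1),
        (if (n : ℝ) * q ≤ (j : ℝ) then (n.choose j : ℝ) * q ^ j * (1 - q) ^ (n - j) else 0) := by
  rw [sum_range_ite_le_eq_sum_Ico_ceil]
  change _ ≤ binomialTail n q ⌈(n : ℝ) * q⌉₊
  obtain ⟨m, hm⟩ : ∃ m, ⌈(n : ℝ) * q⌉₊ = m + 1 :=
    Nat.exists_eq_add_one.2 (Nat.ceil_pos.2 (by positivity))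
  rw [hm]
  rcases Nat.eq_zero_or_pos m with rfl | hm0
  · exact (min_le_left _ _).trans (le_binomialTail_one hn hq0.le (by linarith))
  have hmq : (m : ℝ) < n * q := Nat.lt_ceil.1 (by omega)
  have hn0 : (0 : ℝ) < n := by exact_mod_cast hn
  have hmn : 2 * m + 1 ≤ n := by
    have : ((2 * m : ℕ) : ℝ) < n := by push_cast; nlinarith
    exact_mod_cast this
  have hmn' : (m : ℝ) ≤ n := by exact_mod_cast (by omega : m ≤ n)
  calc min q (1 / 4) ≤ 1 / 4 := min_le_right _ _
    _ ≤ binomialTail n (m / n) (m + 1) := quarter_le_binomialTail_mean hm0 hmn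
    _ ≤ binomialTail n q (m + 1) :=
      monotoneOn_binomialTail n m ⟨by positivity, div_le_one_of_le₀ hmn' hn0.le⟩
        ⟨hq0.le, by linarith⟩ ((div_le_iff₀ hn0).2 (by linarith))
end

section
/- For integers n ≥ 2 and 2 ≤ k ≤ n/2, let P_p denote the Binomial(n,p) law. Then P_{k/n}(N ≥ k+1) ≥ P_{(k-1)/n}(N ≥ k). -/
/-!
Let `F(t) = P_t(N ≥ k)`, the sum of the Bernstein polynomials `b_{n,j}` over `j ≥ k`, and put
`p = (k-1)/n`, `q = k/n`. The derivative of `F` telescopes to `n b_{n-1,k-1}`, and `n (q - p) = 1`,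
so by the mean value theorem `F(q) - F(p) = b_{n-1,k-1}(c)` for some `c ∈ (p, q)`. The claim is
`F(q) - F(p) ≥ b_{n,k}(q)`, and `b_{n,k}(q) = b_{n-1,k-1}(q)` exactly at `q = k/n`. Finally
`b_{n-1,k-1}` is log-concave, so on `[p, q]` it is at least `min (b(p), b(q)) = b(q)`: the endpoint
comparison `b(q) ≤ b(p)` reads `(a+1)^a b^b ≤ a^a (b+1)^b` for `a = k-1 ≤ b = n-k`, which is the
monotonicity of `(1 + 1/m)^m`.
-/

open Finset Polynomial

theorem QuasiconcaveOn.min_le_of_mem_Icc {𝕜 β : Type*} [Field 𝕜] [LinearOrder 𝕜]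
    [IsStrictOrderedRing 𝕜] [LinearOrder β] {s : Set 𝕜} {f : 𝕜 → β}
    (hf : QuasiconcaveOn 𝕜 s f) {a b c : 𝕜} (ha : a ∈ s) (hb : b ∈ s) (hc : c ∈ Set.Icc a b) :
    min (f a) (f b) ≤ f c :=
  ((hf _).ordConnected.out ⟨ha, min_le_left _ _⟩ ⟨hb, min_le_right _ _⟩ hc).2

theorem quasiconcaveOn_pow_mul_one_sub_pow (k m : ℕ) :
    QuasiconcaveOn ℝ (Set.Icc 0 1) fun t : ℝ => t ^ k * (1 - t) ^ m := by
  refine quasiconcaveOn_iff_min_le.2 ⟨convex_Icc 0 1, ?_⟩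
  rintro x ⟨hx0, hx1⟩ y ⟨hy0, hy1⟩ a b ha hb hab
  have hx1' : 0 ≤ 1 - x := sub_nonneg.2 hx1
  have hy1' : 0 ≤ 1 - y := sub_nonneg.2 hy1
  set u := x ^ k * (1 - x) ^ m
  set v := y ^ k * (1 - y) ^ m
  have hamgm {x y : ℝ} (hx : 0 ≤ x) (hy : 0 ≤ y) : x ^ a * y ^ b ≤ a * x + b * y :=
    Real.geom_mean_le_arith_mean2_weighted ha hb hx hy hab
  calc min u v = min u v ^ a * min u v ^ b := by
        rw [← Real.rpow_add' (le_min (by positivity) (by positivity)) (by simp [hab]), hab,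
          Real.rpow_one]
    _ ≤ u ^ a * v ^ b := by gcongr <;> simp
    _ = (x ^ a * y ^ b) ^ k * ((1 - x) ^ a * (1 - y) ^ b) ^ m := by
        rw [Real.mul_rpow (by positivity) (by positivity),
          Real.mul_rpow (by positivity) (by positivity), ← Real.rpow_pow_comm hx0,
          ← Real.rpow_pow_comm hy0, ← Real.rpow_pow_comm hx1', ← Real.rpow_pow_comm hy1']
        ring
    _ ≤ (a * x + b * y) ^ k * (a * (1 - x) + b * (1 - y)) ^ m := by
        gcongr
        · exact hamgm hx0 hy0
        · exact hamgm hx1' hy1'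
    _ = (a • x + b • y) ^ k * (1 - (a • x + b • y)) ^ m := by
        simp only [smul_eq_mul]
        congr 2
        linear_combination hab

namespace Nat

theorem add_one_pow_two_mul_add_one_le (b : ℕ) :
    (b + 1) ^ (2 * b + 1) ≤ b ^ b * (b + 2) ^ (b + 1) := by
  rcases b.eq_zero_or_pos with rfl | hb
  · norm_num
  have bernoulli := pow_add_mul_le_add_pow (R := ℤ) (a := ((b : ℤ) + 1) ^ 2) (b := -1)
    (by positivity) (by nlinarith) (b + 1)
  have hsq : ((b : ℤ) + 1) ^ 2 + -1 = b * (b + 2) := by ring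
  rw [Nat.add_sub_cancel, ← pow_mul, ← pow_mul, hsq, mul_pow] at bernoulli
  zify
  refine le_of_mul_le_mul_left ?_ (by positivity : (0 : ℤ) < b)
  push_cast at bernoulli
  linear_combination bernoulli

theorem add_one_pow_mul_pow_le {a b : ℕ} (hab : a ≤ b) :
    (a + 1) ^ a * b ^ b ≤ a ^ a * (b + 1) ^ b := by
  induction b, hab using Nat.le_induction with
  | base => rw [mul_comm]
  | succ b _ ih =>
    refine Nat.le_of_mul_le_mul_left ?_ (Nat.pow_self_pos (n := b))
    calc b ^ b * ((a + 1) ^ a * (b + 1) ^ (b + 1))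
        = (a + 1) ^ a * b ^ b * (b + 1) ^ (b + 1) := by ring
      _ ≤ a ^ a * (b + 1) ^ b * (b + 1) ^ (b + 1) := by gcongr
      _ = a ^ a * (b + 1) ^ (2 * b + 1) := by ring
      _ ≤ a ^ a * (b ^ b * (b + 2) ^ (b + 1)) := by gcongr; exact add_one_pow_two_mul_add_one_le b
      _ = b ^ b * (a ^ a * (b + 1 + 1) ^ (b + 1)) := by ring

end Nat

namespace bernsteinPolynomial

section CommRing

variable {R : Type*} [CommRing R]

theorem derivative_sum_Icc (n ν : ℕ) :
    derivative (∑ j ∈ Icc (ν + 1) n, bernsteinPolynomial R n j) =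
      n * bernsteinPolynomial R (n - 1) ν := by
  rcases lt_or_ge ν n with hν | hν
  · obtain ⟨m, rfl⟩ : ∃ m, n = m + 1 := ⟨n - 1, by omega⟩
    have htel := sum_Icc_sub (by omega : ν ≤ m) (fun j => -bernsteinPolynomial R m j)
    simp only [neg_sub_neg, eq_zero_of_lt R m.lt_succ_self, sub_zero] at htel
    rw [← map_add_right_Icc, sum_map, derivative_sum]
    simp only [addRightEmbedding_apply, derivative_succ, ← mul_sum, Nat.add_sub_cancel, htel]
  · rcases n.eq_zero_or_pos with rfl | hn
    · simp
    · rw [Icc_eq_empty (by omega), sum_empty, Polynomial.derivative_zero,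
        eq_zero_of_lt R (by omega), mul_zero]

theorem add_one_mul_eq (n ν : ℕ) :
    (ν + 1 : R[X]) * bernsteinPolynomial R n (ν + 1) =
      (n : R[X]) * X * bernsteinPolynomial R (n - 1) ν := by
  rcases n.eq_zero_or_pos with rfl | hn
  · simp [eq_zero_of_lt R (Nat.succ_pos ν)]
  obtain ⟨m, rfl⟩ : ∃ m, n = m + 1 := ⟨n - 1, by omega⟩
  have h := congrArg (Nat.cast : ℕ → R[X]) (Nat.add_one_mul_choose_eq m ν)
  simp only [bernsteinPolynomial, Nat.add_sub_cancel, Nat.add_sub_add_right]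
  push_cast at h ⊢
  linear_combination (X ^ ν * X * (1 - X) ^ (m - ν)) * h.symm

end CommRing

theorem exists_eval_sum_Icc_sub_eval_eq (n ν : ℕ) {p q : ℝ} (hpq : p < q) :
    ∃ c ∈ Set.Ioo p q, (∑ j ∈ Icc (ν + 1) n, bernsteinPolynomial ℝ n j).eval q -
      (∑ j ∈ Icc (ν + 1) n, bernsteinPolynomial ℝ n j).eval p =
        (q - p) * n * (bernsteinPolynomial ℝ (n - 1) ν).eval c := by
  set P := ∑ j ∈ Icc (ν + 1) n, bernsteinPolynomial ℝ n j
  obtain ⟨c, hc, hslope⟩ := exists_deriv_eq_slope (fun t => P.eval t) hpq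
    P.continuous.continuousOn P.differentiable.differentiableOn
  rw [Polynomial.deriv, derivative_sum_Icc, eval_mul, eval_natCast,
    eq_div_iff (sub_pos.2 hpq).ne'] at hslope
  exact ⟨c, hc, by rw [← hslope]; ring⟩

theorem eval_add_one_div (n ν : ℕ) (hn : 0 < n) :
    (bernsteinPolynomial ℝ n (ν + 1)).eval (((ν : ℝ) + 1) / n) =
      (bernsteinPolynomial ℝ (n - 1) ν).eval (((ν : ℝ) + 1) / n) := by
  have h := congrArg (eval (((ν : ℝ) + 1) / n)) (add_one_mul_eq (R := ℝ) n ν)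
  simp only [eval_mul, eval_add, eval_natCast, eval_one, eval_X] at h
  rw [mul_div_cancel₀ _ (by positivity)] at h
  exact mul_left_cancel₀ (by positivity) h

theorem quasiconcaveOn_eval (n ν : ℕ) :
    QuasiconcaveOn ℝ (Set.Icc 0 1) fun t => (bernsteinPolynomial ℝ n ν).eval t := by
  have heq : (fun t => (bernsteinPolynomial ℝ n ν).eval t) =
      (fun x => (n.choose ν : ℝ) * x) ∘ fun t => t ^ ν * (1 - t) ^ (n - ν) := by
    funext t
    simp [bernsteinPolynomial, mul_assoc]
  rw [heq]
  exact (quasiconcaveOn_pow_mul_one_sub_pow ν (n - ν)).monotone_comp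
    (monotone_mul_left_of_nonneg (Nat.cast_nonneg _))

theorem eval_add_one_div_le_eval_div {n ν : ℕ} (h : 2 * ν < n) :
    (bernsteinPolynomial ℝ (n - 1) ν).eval (((ν : ℝ) + 1) / n) ≤
      (bernsteinPolynomial ℝ (n - 1) ν).eval ((ν : ℝ) / n) := by
  obtain ⟨m, rfl⟩ : ∃ m, n = ν + m + 1 := ⟨n - ν - 1, by omega⟩
  have hN : (0 : ℝ) < ν + m + 1 := by positivity
  have key : ((ν + 1) ^ ν * m ^ m : ℝ) ≤ ν ^ ν * (m + 1) ^ m := by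
    exact_mod_cast Nat.add_one_pow_mul_pow_le (by omega : ν ≤ m)
  have h₁ : 1 - ((ν : ℝ) + 1) / (ν + m + 1) = m / (ν + m + 1) := by field_simp; ring
  have h₂ : 1 - (ν : ℝ) / (ν + m + 1) = (m + 1) / (ν + m + 1) := by field_simp; ring
  simp only [bernsteinPolynomial, Nat.add_sub_cancel, Nat.add_sub_cancel_left, eval_mul,
    eval_pow, eval_sub, eval_one, eval_X, eval_natCast]
  push_cast
  rw [h₁, h₂, div_pow, div_pow, div_pow, div_pow, mul_assoc, mul_assoc, div_mul_div_comm,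
    div_mul_div_comm]
  gcongr

theorem eval_add_one_div_le_eval {n ν : ℕ} (h : 2 * ν < n) {c : ℝ}
    (hc : c ∈ Set.Icc ((ν : ℝ) / n) (((ν : ℝ) + 1) / n)) :
    (bernsteinPolynomial ℝ (n - 1) ν).eval (((ν : ℝ) + 1) / n) ≤
      (bernsteinPolynomial ℝ (n - 1) ν).eval c := by
  have hq1 : ((ν : ℝ) + 1) / n ≤ 1 :=
    div_le_one_of_le₀ (by exact_mod_cast (by omega : ν + 1 ≤ n)) (Nat.cast_nonneg n)
  have hmin := (quasiconcaveOn_eval (n - 1) ν).min_le_of_mem_Icc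
    ⟨by positivity, hc.1.trans (hc.2.trans hq1)⟩ ⟨by positivity, hq1⟩ hc
  rwa [min_eq_right (eval_add_one_div_le_eval_div h)] at hmin

end bernsteinPolynomial

theorem binomial_tail_step_general (n k : ℕ) (hk : 2 ≤ k) (hkn : 2 * k ≤ n) :
    ∑ j ∈ Finset.Icc k n,
        (n.choose j : ℝ) * (((k : ℝ) - 1) / n) ^ j * (1 - ((k : ℝ) - 1) / n) ^ (n - j) ≤
      ∑ j ∈ Finset.Icc (k + 1) n,
        (n.choose j : ℝ) * ((k : ℝ) / n) ^ j * (1 - (k : ℝ) / n) ^ (n - j) := by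
  obtain ⟨ν, rfl⟩ : ∃ ν, k = ν + 1 := ⟨k - 1, by omega⟩
  have tail_eq (i : ℕ) (t : ℝ) : ∑ j ∈ Icc i n, (n.choose j : ℝ) * t ^ j * (1 - t) ^ (n - j) =
      (∑ j ∈ Icc i n, bernsteinPolynomial ℝ n j).eval t := by
    simp [eval_finsetSum, bernsteinPolynomial]
  push_cast
  rw [add_sub_cancel_right, tail_eq, tail_eq]
  have hn : (0 : ℝ) < n := by exact_mod_cast (by omega : 0 < n)
  have hpq : (ν : ℝ) / n < (ν + 1) / n := div_lt_div_of_pos_right (by linarith) hn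
  obtain ⟨c, hc, hincr⟩ := bernsteinPolynomial.exists_eval_sum_Icc_sub_eval_eq n ν hpq
  have hsplit := add_sum_Ioc_eq_sum_Icc (f := bernsteinPolynomial ℝ n) (by omega : ν + 1 ≤ n)
  nth_rw 1 [← hsplit] at hincr
  rw [← Icc_add_one_left_eq_Ioc, eval_add, bernsteinPolynomial.eval_add_one_div n ν
    (by omega), show ((ν : ℝ) + 1) / n - ν / n = 1 / n by ring, one_div_mul_cancel hn.ne',
    one_mul] at hincr
  have hmin := bernsteinPolynomial.eval_add_one_div_le_eval (by omega) (Set.Ioo_subset_Icc_self hc)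
  linarith

/-- For n ≥ 2 and 2 ≤ k ≤ n/2: P_{k/n}(N ≥ k+1) ≥ P_{(k-1)/n}(N ≥ k), where
P_p denotes the Binomial(n,p) law. -/
theorem binomial_tail_step (n k : ℕ) (hn : 2 ≤ n) (hk : 2 ≤ k) (hkn : 2 * k ≤ n) :
    ∑ j ∈ Finset.Icc k n,
        (n.choose j : ℝ) * (((k : ℝ) - 1) / n) ^ j * (1 - ((k : ℝ) - 1) / n) ^ (n - j) ≤
      ∑ j ∈ Finset.Icc (k + 1) n,
        (n.choose j : ℝ) * ((k : ℝ) / n) ^ j * (1 - (k : ℝ) / n) ^ (n - j) :=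
  binomial_tail_step_general n k hk hkn
end

section
/- For integers 2 ≤ k ≤ n/2, the following inequality holds: k ∫_0^{(k-1)/n} t^{k-1}(1-t)^{n-k} dt ≤ (n-k) ∫_0^{k/n} t^k (1-t)^{n-k-1} dt. -/
/-!
Write `f t = t ^ (k - 1) * (1 - t) ^ (n - k)` and `F t = t ^ k * (1 - t) ^ (n - k)`. Since
`F' = k f - (n - k) t ^ k (1 - t) ^ (n - k - 1)`, the right-hand side equals
`k ∫₀^{k/n} f - F (k/n)`, so the claim reduces to `F (k/n) ≤ k ∫_{(k-1)/n}^{k/n} f`.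
The interval has length `1/n` and `F (k/n) = (k/n) f (k/n)`, so it suffices that
`f t ≥ f (k/n)` on it. Substituting `t = (k/n) (1 - y)` with `0 ≤ y ≤ 1/k`, this becomes
`1 ≤ (1 - y) ^ (k - 1) * (1 + k y / (n - k)) ^ (n - k)`, which follows from Bernoulli's
inequality (once in real exponent, using `n - k ≥ k`, and once for `(1 - y²) ^ (k - 1)`).
-/

open Real intervalIntegral

lemma one_add_pow_le_one_add_mul_div_pow {k d : ℕ} (hk : 0 < k) (hkd : k ≤ d) {y : ℝ}
    (hy : -1 ≤ y) : (1 + y) ^ k ≤ (1 + k / d * y) ^ d := by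
  have hk0 : (0 : ℝ) < k := by exact_mod_cast hk
  have hkd' : (k : ℝ) ≤ d := by exact_mod_cast hkd
  have hd0 : (0 : ℝ) < d := hk0.trans_le hkd'
  have hkd1 : (k : ℝ) / d ≤ 1 := (div_le_one hd0).2 hkd'
  have hs : -1 ≤ (k : ℝ) / d * y := by nlinarith [div_nonneg hk0.le hd0.le]
  have bernoulli : 1 + y ≤ (1 + k / d * y) ^ ((d : ℝ) / k) := by
    simpa [field] using one_add_mul_self_le_rpow_one_add hs ((one_le_div hk0).2 hkd')
  calc (1 + y) ^ k = (1 + y) ^ (k : ℝ) := (rpow_natCast _ _).symm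
    _ ≤ ((1 + k / d * y) ^ ((d : ℝ) / k)) ^ (k : ℝ) := by gcongr; linarith
    _ = (1 + k / d * y) ^ d := by
      rw [← rpow_mul (by linarith), div_mul_cancel₀ _ hk0.ne', rpow_natCast]

lemma one_le_one_sub_pow_pred_mul_one_add_pow {k : ℕ} (hk : 0 < k) {y : ℝ} (hy : 0 ≤ y)
    (hky : k * y ≤ 1) : 1 ≤ (1 - y) ^ (k - 1) * (1 + y) ^ k := by
  obtain ⟨m, rfl⟩ : ∃ m, k = m + 1 := ⟨k - 1, by omega⟩
  push_cast at hky
  have bernoulli : 1 - m * y ^ 2 ≤ (1 - y ^ 2) ^ m := by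
    simpa [← sub_eq_add_neg] using one_add_mul_le_pow (a := -y ^ 2) (by nlinarith) m
  -- since `m * y ≤ 1 - y`, we get `m * y * (1 + y) ≤ 1 - y ^ 2 ≤ 1`
  calc (1 : ℝ) ≤ (1 - m * y ^ 2) * (1 + y) := by nlinarith [mul_nonneg hy hy]
    _ ≤ (1 - y ^ 2) ^ m * (1 + y) := by gcongr
    _ = (1 - y) ^ (m + 1 - 1) * (1 + y) ^ (m + 1) := by
      rw [Nat.add_sub_cancel, pow_succ (1 + y), ← mul_assoc, ← mul_pow]; ring

lemma one_le_one_sub_pow_pred_mul_one_add_mul_div_pow {k d : ℕ} (hk : 0 < k) (hkd : k ≤ d)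
    {y : ℝ} (hy : 0 ≤ y) (hky : k * y ≤ 1) :
    1 ≤ (1 - y) ^ (k - 1) * (1 + k / d * y) ^ d := by
  have hy1 : y ≤ 1 := by nlinarith [(show (1 : ℝ) ≤ k by exact_mod_cast hk)]
  calc 1 ≤ (1 - y) ^ (k - 1) * (1 + y) ^ k := one_le_one_sub_pow_pred_mul_one_add_pow hk hy hky
    _ ≤ _ := by
      gcongr
      exact one_add_pow_le_one_add_mul_div_pow hk hkd (by linarith)

lemma pow_pred_mul_one_sub_pow_le_of_mem_Icc {n k : ℕ} (hk : 0 < k) (hkn : 2 * k ≤ n) {t : ℝ}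
    (ht : t ∈ Set.Icc (((k : ℝ) - 1) / n) (k / n)) :
    ((k : ℝ) / n) ^ (k - 1) * (1 - k / n) ^ (n - k) ≤ t ^ (k - 1) * (1 - t) ^ (n - k) := by
  have hk0 : (0 : ℝ) < k := by exact_mod_cast hk
  have hn0 : (0 : ℝ) < n := by exact_mod_cast (show 0 < n by omega)
  have hd0 : (0 : ℝ) < n - k := by
    have : (2 * k : ℝ) ≤ n := by exact_mod_cast hkn
    linarith
  have hnk : ((n - k : ℕ) : ℝ) = n - k := Nat.cast_sub (by omega)
  obtain ⟨hat, htb⟩ := ht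
  rw [div_le_iff₀ hn0] at hat
  rw [le_div_iff₀ hn0] at htb
  -- `t = (k / n) (1 - y)` and `1 - t = (1 - k / n) (1 + k y / (n - k))`
  set y : ℝ := 1 - t * n / k
  have hy : 0 ≤ y := by simp only [y, sub_nonneg, div_le_one hk0]; linarith
  have hky : k * y ≤ 1 := by simp only [y]; field_simp; linarith
  have hb : 0 ≤ ((k : ℝ) / n) ^ (k - 1) * (1 - k / n) ^ (n - k) := by
    have : (k : ℝ) / n ≤ 1 := (div_le_one hn0).2 (by linarith)
    have : 0 ≤ 1 - (k : ℝ) / n := by linarith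
    positivity
  calc ((k : ℝ) / n) ^ (k - 1) * (1 - k / n) ^ (n - k)
      ≤ ((k : ℝ) / n) ^ (k - 1) * (1 - k / n) ^ (n - k) *
        ((1 - y) ^ (k - 1) * (1 + k / (n - k : ℕ) * y) ^ (n - k)) :=
      le_mul_of_one_le_right hb
        (one_le_one_sub_pow_pred_mul_one_add_mul_div_pow hk (by omega) hy hky)
    _ = (k / n * (1 - y)) ^ (k - 1) * ((1 - k / n) * (1 + k / (n - k : ℕ) * y)) ^ (n - k) := by
      rw [mul_pow, mul_pow]; ring
    _ = t ^ (k - 1) * (1 - t) ^ (n - k) := by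
      congr 2
      · simp only [y]; field_simp; ring
      · rw [hnk]; simp only [y]; field_simp; ring

lemma mul_integral_pow_pred_mul_one_sub_pow_sub {p q : ℕ} (hp : 0 < p) (b : ℝ) :
    p * (∫ t in (0 : ℝ)..b, t ^ (p - 1) * (1 - t) ^ q) -
      q * (∫ t in (0 : ℝ)..b, t ^ p * (1 - t) ^ (q - 1)) = b ^ p * (1 - b) ^ q := by
  have hderiv (x : ℝ) : HasDerivAt (fun t : ℝ => t ^ p * (1 - t) ^ q)
      (p * (x ^ (p - 1) * (1 - x) ^ q) - q * (x ^ p * (1 - x) ^ (q - 1))) x := by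
    refine ((hasDerivAt_pow p x).mul
      (((hasDerivAt_id' x).const_sub 1).fun_pow q)).congr_deriv ?_
    ring
  rw [← integral_const_mul, ← integral_const_mul,
    ← integral_sub (Continuous.intervalIntegrable (by fun_prop) _ _)
      (Continuous.intervalIntegrable (by fun_prop) _ _),
    integral_eq_sub_of_hasDerivAt (fun x _ => hderiv x)
      (Continuous.intervalIntegrable (by fun_prop) _ _)]
  simp [hp.ne']

lemma pow_mul_one_sub_pow_le_mul_integral {n k : ℕ} (hk : 0 < k) (hkn : 2 * k ≤ n) :
    ((k : ℝ) / n) ^ k * (1 - k / n) ^ (n - k) ≤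
      k * ∫ t in ((k : ℝ) - 1) / n..(k / n), t ^ (k - 1) * (1 - t) ^ (n - k) := by
  have hab : ((k : ℝ) - 1) / n ≤ k / n := by gcongr; linarith
  have hlength : (k : ℝ) / n - ((k : ℝ) - 1) / n = 1 / n := by ring
  have hmono := integral_mono_on (μ := MeasureTheory.volume) hab intervalIntegrable_const
    (Continuous.intervalIntegrable (by fun_prop) _ _)
    (fun t ht => pow_pred_mul_one_sub_pow_le_of_mem_Icc hk hkn ht)
  rw [integral_const, hlength, smul_eq_mul] at hmono
  calc ((k : ℝ) / n) ^ k * (1 - k / n) ^ (n - k)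
      = k * (1 / n * (((k : ℝ) / n) ^ (k - 1) * (1 - k / n) ^ (n - k))) := by
        rw [← pow_sub_one_mul hk.ne' ((k : ℝ) / n)]; ring
    _ ≤ _ := by gcongr

/-- For integers 2 ≤ k ≤ n/2:
k ∫_0^{(k-1)/n} t^{k-1}(1-t)^{n-k} dt ≤ (n-k) ∫_0^{k/n} t^k (1-t)^{n-k-1} dt. -/
theorem beta_integral_inequality (n k : ℕ) (hk : 2 ≤ k) (hkn : 2 * k ≤ n) :
    (k : ℝ) * ∫ t in (0 : ℝ)..(((k : ℝ) - 1) / n), t ^ (k - 1) * (1 - t) ^ (n - k) ≤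
      ((n : ℝ) - k) * ∫ t in (0 : ℝ)..((k : ℝ) / n), t ^ k * (1 - t) ^ (n - k - 1) := by
  have hk0 : 0 < k := by omega
  have hsplit := integral_add_adjacent_intervals (μ := MeasureTheory.volume)
    (a := 0) (b := ((k : ℝ) - 1) / n) (c := k / n)
    (f := fun t => t ^ (k - 1) * (1 - t) ^ (n - k))
    (Continuous.intervalIntegrable (by fun_prop) _ _)
    (Continuous.intervalIntegrable (by fun_prop) _ _)
  have hibp := mul_integral_pow_pred_mul_one_sub_pow_sub (q := n - k) hk0 ((k : ℝ) / n)
  rw [Nat.cast_sub (by omega)] at hibp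
  linear_combination (k : ℝ) * hsplit + hibp + pow_mul_one_sub_pow_le_mul_integral hk0 hkn
end

section
/- The function t ↦ 1 - ((t-1)/t)^t - ((t-1)/t)^{t-1} is increasing on [1, ∞); in particular, for all integers n ≥ 2, 1 - ((n-1)/n)^n - ((n-1)/n)^{n-1} ≥ 1/4. -/
/-!
Writing `x = (t - 1) / t`, we have `x ^ t + x ^ (t - 1) = (1 + x) * x ^ (t - 1) = exp h(t)` with
`h(t) = log (2t - 1) + (t - 1) log (t - 1) - t log t`, also at `t = 1`, where `0 ^ 0 = 1` and
`y log y` is continuous at `0`. Since `h'(t) = 2 / (2t - 1) - log (1 + 1 / (t - 1))`, the bound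
`2y / (y + 2) < log (1 + y)` makes `h` strictly decreasing, and the value at `n = 2` is `1/4`.
-/

open Real Set

lemma two_div_two_mul_sub_one_lt_log_sub_log {t : ℝ} (ht : 1 < t) :
    2 / (2 * t - 1) < log t - log (t - 1) := by
  have ht₁ : 0 < t - 1 := sub_pos.2 ht
  have h := lt_log_one_add_of_pos (inv_pos.2 ht₁)
  rw [← log_div (by positivity) ht₁.ne']
  have hl : 1 + (t - 1)⁻¹ = t / (t - 1) := by field_simp; ring
  have hr : 2 * (t - 1)⁻¹ / ((t - 1)⁻¹ + 2) = 2 / (2 * t - 1) := by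
    have : 2 * t - 1 ≠ 0 := by linarith
    field_simp; ring
  rwa [hl, hr] at h

/-- At `t = n` its exponential is `P(Binomial(n, 1/n) ≤ 1)`. -/
noncomputable def logProbAtMostOne (t : ℝ) : ℝ :=
  log (2 * t - 1) + (t - 1) * log (t - 1) - t * log t

lemma hasDerivAt_logProbAtMostOne {t : ℝ} (ht : 1 < t) :
    HasDerivAt logProbAtMostOne (2 / (2 * t - 1) - (log t - log (t - 1))) t := by
  have h₁ : HasDerivAt (fun s : ℝ => log (2 * s - 1)) (2 / (2 * t - 1)) t := by
    simpa using (((hasDerivAt_id t).const_mul 2).sub_const 1).log (by simp; linarith)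
  have h₂ : HasDerivAt (fun s : ℝ => (s - 1) * log (s - 1)) (log (t - 1) + 1) t := by
    simpa [Function.comp_def] using
      (hasDerivAt_mul_log (sub_pos.2 ht).ne').comp t ((hasDerivAt_id t).sub_const 1)
  exact ((h₁.add h₂).sub (hasDerivAt_mul_log (by linarith))).congr_deriv (by ring)

lemma continuousOn_logProbAtMostOne : ContinuousOn logProbAtMostOne (Ici 1) := by
  have h : ContinuousOn (fun t : ℝ => log (2 * t - 1)) (Ici 1) :=
    ContinuousOn.log (by fun_prop) fun t (ht : 1 ≤ t) => by linarith
  exact (h.add (continuous_mul_log.comp (continuous_sub_right 1)).continuousOn).sub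
    continuous_mul_log.continuousOn

lemma strictAntiOn_logProbAtMostOne : StrictAntiOn logProbAtMostOne (Ici 1) := by
  refine strictAntiOn_of_deriv_neg (convex_Ici 1) continuousOn_logProbAtMostOne fun t ht => ?_
  rw [interior_Ici, mem_Ioi] at ht
  rw [(hasDerivAt_logProbAtMostOne ht).deriv, sub_neg]
  exact two_div_two_mul_sub_one_lt_log_sub_log ht

lemma rpow_add_rpow_sub_one_eq_exp {t : ℝ} (ht : 1 ≤ t) :
    ((t - 1) / t) ^ t + ((t - 1) / t) ^ (t - 1) = exp (logProbAtMostOne t) := by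
  rcases ht.eq_or_lt with rfl | ht
  · norm_num [logProbAtMostOne]
  have ht₀ : 0 < t := by linarith
  have ht₁ : 0 < t - 1 := by linarith
  have hx : 0 < (t - 1) / t := div_pos ht₁ ht₀
  have hsplit : ((t - 1) / t) ^ t = (t - 1) / t * ((t - 1) / t) ^ (t - 1) := by
    have h := rpow_add hx 1 (t - 1)
    rwa [rpow_one, add_sub_cancel] at h
  have hsum : (t - 1) / t + 1 = (2 * t - 1) / t := by field_simp; ring
  have hlog : logProbAtMostOne t = log ((2 * t - 1) / t) + log ((t - 1) / t) * (t - 1) := by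
    rw [logProbAtMostOne, log_div (by linarith) ht₀.ne', log_div ht₁.ne' ht₀.ne']
    ring
  rw [hsplit, ← add_one_mul, hsum, rpow_def_of_pos hx, hlog, exp_add,
    exp_log (div_pos (by linarith) ht₀)]

lemma strictMonoOn_one_sub_rpow_sub_rpow :
    StrictMonoOn (fun t : ℝ => 1 - ((t - 1) / t) ^ t - ((t - 1) / t) ^ (t - 1)) (Ici 1) := by
  intro a ha b hb hab
  simp only [sub_sub, rpow_add_rpow_sub_one_eq_exp ha, rpow_add_rpow_sub_one_eq_exp hb]
  gcongr
  exact strictAntiOn_logProbAtMostOne ha hb hab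

/-- The function t ↦ 1 - ((t-1)/t)^t - ((t-1)/t)^{t-1} is increasing on [1, ∞);
in particular for all integers n ≥ 2, 1 - ((n-1)/n)^n - ((n-1)/n)^{n-1} ≥ 1/4. -/
theorem increasing_binomial_aux :
    StrictMonoOn (fun t : ℝ => 1 - ((t - 1) / t) ^ t - ((t - 1) / t) ^ (t - 1))
      (Set.Ici (1 : ℝ)) ∧
    ∀ n : ℕ, 2 ≤ n →
      (1 : ℝ) / 4 ≤ 1 - (((n : ℝ) - 1) / n) ^ n - (((n : ℝ) - 1) / n) ^ (n - 1) := by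
  refine ⟨strictMonoOn_one_sub_rpow_sub_rpow, fun n hn => ?_⟩
  have h := strictMonoOn_one_sub_rpow_sub_rpow.monotoneOn (by norm_num : (2 : ℝ) ∈ Ici 1)
    (mem_Ici.2 (by exact_mod_cast (by omega : 1 ≤ n))) (by exact_mod_cast hn : (2 : ℝ) ≤ n)
  rw [← rpow_natCast, ← rpow_natCast, Nat.cast_sub (by omega : 1 ≤ n), Nat.cast_one]
  refine le_of_eq_of_le ?_ h
  norm_num [rpow_two]
end

section
/- There exist two classifiers h₁, h₂: [0,1] → [-1,1] and distributions P⁻ = P⁺ = Uniform[0,1] such that for h_λ = λh₁ + (1-λ)h₂ with λ ∈ [0,1]: R⁻(h_λ) = α·𝟙(λ ≤ 1/2) and R⁺(h_λ) = (1-α)𝟙(λ < 1/2) + 𝟙(λ ≥ 1/2); consequently any h_λ with R⁻(h_λ) < α satisfies R⁺(h_λ) - min_{λ': R⁻(h_{λ'}) ≤ α} R⁺(h_{λ'}) = α > 0. -/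
open MeasureTheory

/-- Type I error wrt the uniform distribution on [0,1]: R⁻(h) = P(h(X) ≥ 0). -/
noncomputable def Rminus (h : ℝ → ℝ) : ℝ :=
  (volume {x : ℝ | x ∈ Set.Icc (0:ℝ) 1 ∧ 0 ≤ h x}).toReal

/-- Type II error wrt the uniform distribution on [0,1]: R⁺(h) = P(h(X) ≤ 0). -/
noncomputable def Rplus (h : ℝ → ℝ) : ℝ :=
  (volume {x : ℝ | x ∈ Set.Icc (0:ℝ) 1 ∧ h x ≤ 0}).toReal

lemma np_Rminus_eq (α : ℝ) (hα0 : 0 < α) (hα1 : α < 1) (l : ℝ) :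
    Rminus (fun x => l * (-1) + (1 - l) * (if x ≤ α then 1 else -1)) =
      if l ≤ 1/2 then α else 0 := by
  unfold Rminus
  by_cases hc : l ≤ 1/2
  · rw [if_pos hc]
    have hset : {x : ℝ | x ∈ Set.Icc (0:ℝ) 1 ∧
        0 ≤ l * (-1) + (1 - l) * (if x ≤ α then 1 else -1)} = Set.Icc 0 α := by
      ext x
      simp only [Set.mem_setOf_eq, Set.mem_Icc]
      by_cases hx : x ≤ α
      · rw [if_pos hx]
        constructor
        · rintro ⟨⟨h0, _⟩, _⟩; exact ⟨h0, hx⟩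
        · rintro ⟨h0, _⟩; exact ⟨⟨h0, hx.trans hα1.le⟩, by linarith⟩
      · rw [if_neg hx]
        constructor
        · rintro ⟨_, h⟩; linarith
        · rintro ⟨_, h⟩; exact absurd h hx
    rw [hset, Real.volume_Icc, ENNReal.toReal_ofReal (by linarith)]
    ring
  · rw [if_neg hc]
    push_neg at hc
    have hset : {x : ℝ | x ∈ Set.Icc (0:ℝ) 1 ∧
        0 ≤ l * (-1) + (1 - l) * (if x ≤ α then 1 else -1)} = ∅ := by
      ext x
      simp only [Set.mem_setOf_eq, Set.mem_empty_iff_false, iff_false, not_and]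
      intro _
      by_cases hx : x ≤ α <;> simp [hx] <;> linarith
    rw [hset]
    simp

lemma np_Rplus_eq (α : ℝ) (hα0 : 0 < α) (hα1 : α < 1) (l : ℝ) :
    Rplus (fun x => l * (-1) + (1 - l) * (if x ≤ α then 1 else -1)) =
      if l < 1/2 then 1 - α else 1 := by
  unfold Rplus
  by_cases hc : l < 1/2
  · rw [if_pos hc]
    have hset : {x : ℝ | x ∈ Set.Icc (0:ℝ) 1 ∧
        l * (-1) + (1 - l) * (if x ≤ α then 1 else -1) ≤ 0} = Set.Ioc α 1 := by
      ext x
      by_cases hx : x ≤ α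
      · simp only [Set.mem_setOf_eq, Set.mem_Icc, hx, if_true, Set.mem_Ioc]
        constructor
        · rintro ⟨_, h⟩; linarith
        · rintro ⟨h, _⟩; linarith
      · simp only [Set.mem_setOf_eq, Set.mem_Icc, hx, if_false, Set.mem_Ioc]
        push_neg at hx
        constructor
        · rintro ⟨⟨_, h1⟩, _⟩; exact ⟨hx, h1⟩
        · rintro ⟨_, h1⟩; exact ⟨⟨by linarith, h1⟩, by linarith⟩
    rw [hset, Real.volume_Ioc, ENNReal.toReal_ofReal (by linarith)]
  · rw [if_neg hc]
    push_neg at hc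
    have hset : {x : ℝ | x ∈ Set.Icc (0:ℝ) 1 ∧
        l * (-1) + (1 - l) * (if x ≤ α then 1 else -1) ≤ 0} = Set.Icc 0 1 := by
      ext x
      simp only [Set.mem_setOf_eq, and_iff_left_iff_imp]
      intro _
      by_cases hx : x ≤ α <;> simp [hx] <;> linarith
    rw [hset, Real.volume_Icc, ENNReal.toReal_ofReal (by norm_num)]
    norm_num

/-- Negative result for Neyman–Pearson with strengthened constraints: there exist
classifiers h₁, h₂ with values in [-1,1] such that, for the uniform distribution on
[0,1], the convex combination h_λ = λh₁ + (1-λ)h₂ satisfies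
R⁻(h_λ) = α·𝟙(λ ≤ 1/2), R⁺(h_λ) = (1-α)·𝟙(λ < 1/2) + 𝟙(λ ≥ 1/2), and any λ with
R⁻(h_λ) < α has excess type II error R⁺(h_λ) - min_{λ' : R⁻(h_{λ'}) ≤ α} R⁺(h_{λ'}) = α. -/
theorem np_negative_example (α : ℝ) (hα : α ∈ Set.Ioo (0:ℝ) 1) :
    ∃ h₁ h₂ : ℝ → ℝ,
      (∀ x, h₁ x ∈ Set.Icc (-1:ℝ) 1) ∧ (∀ x, h₂ x ∈ Set.Icc (-1:ℝ) 1) ∧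
      (∀ l ∈ Set.Icc (0:ℝ) 1,
        Rminus (fun x => l * h₁ x + (1 - l) * h₂ x) = if l ≤ 1/2 then α else 0) ∧
      (∀ l ∈ Set.Icc (0:ℝ) 1,
        Rplus (fun x => l * h₁ x + (1 - l) * h₂ x) = if l < 1/2 then 1 - α else 1) ∧
      (∀ l ∈ Set.Icc (0:ℝ) 1,
        Rminus (fun x => l * h₁ x + (1 - l) * h₂ x) < α →
          Rplus (fun x => l * h₁ x + (1 - l) * h₂ x) -
            sInf ((fun l' : ℝ => Rplus (fun x => l' * h₁ x + (1 - l') * h₂ x)) ''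
              {l' | l' ∈ Set.Icc (0:ℝ) 1 ∧
                Rminus (fun x => l' * h₁ x + (1 - l') * h₂ x) ≤ α}) = α) ∧
      0 < α := by
  obtain ⟨hα0, hα1⟩ := hα
  refine ⟨fun _ => -1, fun x => if x ≤ α then 1 else -1, ?_, ?_, ?_, ?_, ?_, hα0⟩
  · intro x; constructor <;> norm_num
  · intro x; by_cases h : x ≤ α <;> simp [h]
  · intro l _; exact np_Rminus_eq α hα0 hα1 l
  · intro l _; exact np_Rplus_eq α hα0 hα1 l
  · intro l hl hlt
    rw [np_Rminus_eq α hα0 hα1 l] at hlt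
    have hl2 : ¬ l ≤ 1/2 := by
      intro h; rw [if_pos h] at hlt; exact lt_irrefl α hlt
    rw [np_Rplus_eq α hα0 hα1 l, if_neg (by push_neg at hl2 ⊢; exact hl2.le)]
    have himg : ∀ y ∈ ((fun l' : ℝ => Rplus (fun x => l' * (-1) + (1 - l') *
        (if x ≤ α then 1 else -1))) ''
        {l' | l' ∈ Set.Icc (0:ℝ) 1 ∧
          Rminus (fun x => l' * (-1) + (1 - l') * (if x ≤ α then 1 else -1)) ≤ α}),
        1 - α ≤ y := by
      rintro y ⟨l', _, rfl⟩
      dsimp only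
      rw [np_Rplus_eq α hα0 hα1 l']
      split <;> linarith
    have hmem : (1 - α) ∈ ((fun l' : ℝ => Rplus (fun x => l' * (-1) + (1 - l') *
        (if x ≤ α then 1 else -1))) ''
        {l' | l' ∈ Set.Icc (0:ℝ) 1 ∧
          Rminus (fun x => l' * (-1) + (1 - l') * (if x ≤ α then 1 else -1)) ≤ α}) := by
      refine ⟨0, ⟨⟨le_refl 0, by norm_num⟩, ?_⟩, ?_⟩
      · rw [np_Rminus_eq α hα0 hα1 0, if_pos (by norm_num)]
      · dsimp only
        rw [np_Rplus_eq α hα0 hα1 0, if_pos (by norm_num)]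
    have hinf : sInf ((fun l' : ℝ => Rplus (fun x => l' * (-1) + (1 - l') *
        (if x ≤ α then 1 else -1))) ''
        {l' | l' ∈ Set.Icc (0:ℝ) 1 ∧
          Rminus (fun x => l' * (-1) + (1 - l') * (if x ≤ α then 1 else -1)) ≤ α}) = 1 - α := by
      apply le_antisymm
      · exact csInf_le ⟨1 - α, himg⟩ hmem
      · exact le_csInf ⟨1 - α, hmem⟩ himg
    rw [hinf]
    ring
end
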